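/- Let V be a finite-dimensional normed space, D a balanced cone spanning V, and f : B(x₀, 2r) → ℝ a D-convex function. For all x, y ∈ B(x₀, r) with x − y ∈ D, it holds that |f(x) − f(y)| ≤ (m/r)·‖x − y‖, where m = osc(f, B(x₀, 2r)) = sup f − inf f over B(x₀,2r). -/

import Mathlib

open Set Metric

/-- D-convexity of a real-valued function on a set `S`. -/
def DConvexOn {V : Type*} [NormedAddCommGroup V] [NormedSpace ℝ V]
    (D S : Set V) (f : V → ℝ) : Prop :=
  ∀ ⦃x y : V⦄, x ∈ S → y ∈ S → x - y ∈ D → segment ℝ x y ⊆ S →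
    ConvexOn ℝ (segment ℝ x y) f

/-!
Push `x` away from `y` along the line through them to the point `z` at distance `r` from `x`;
`z` still lies in `B(x₀, 2r)` and `z - y` is a positive multiple of `x - y`, so `f` is convex on
`[z, y]`. Writing `x` as the convex combination `t z + (1 - t) y` with `t = ‖x - y‖ / (‖x - y‖ + r)`
gives `f x - f y ≤ t (f z - f y) ≤ t m ≤ (m / r) ‖x - y‖`; swapping `x` and `y` (using `-D ⊆ D`)
gives the other half of the absolute value.
-/

lemma ConvexOn.sub_le_mul_sub {E : Type*} [AddCommGroup E] [Module ℝ E] {s : Set E}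
    {f : E → ℝ} (hf : ConvexOn ℝ s f) {a b : E} (ha : a ∈ s) (hb : b ∈ s) {t : ℝ}
    (ht₀ : 0 ≤ t) (ht₁ : t ≤ 1) :
    f (t • a + (1 - t) • b) - f b ≤ t * (f a - f b) := by
  have h := hf.2 ha hb ht₀ (sub_nonneg.2 ht₁) (by ring)
  simp only [smul_eq_mul] at h
  linarith

theorem DConvexOn.sub_le_div_mul_norm {V : Type*} [NormedAddCommGroup V] [NormedSpace ℝ V]
    {D : Set V} (hD : ∀ t : ℝ, 0 < t → ∀ v ∈ D, t • v ∈ D) {x₀ : V} {r : ℝ} (hr : 0 < r)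
    {f : V → ℝ} (hf : DConvexOn D (ball x₀ (2 * r)) f) {m : ℝ}
    (hm : ∀ u ∈ ball x₀ (2 * r), ∀ v ∈ ball x₀ (2 * r), f u - f v ≤ m) {x y : V}
    (hx : x ∈ ball x₀ r) (hy : y ∈ ball x₀ r) (hxy : x - y ∈ D) :
    f x - f y ≤ m / r * ‖x - y‖ := by
  rcases eq_or_ne x y with rfl | hne
  · simp
  set d := ‖x - y‖
  have hd : 0 < d := norm_pos_iff.2 (sub_ne_zero.2 hne)
  have hball : ball x₀ r ⊆ ball x₀ (2 * r) := ball_subset_ball (by linarith)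
  set z := x + (r / d) • (x - y)
  have hzx : dist z x = r := by
    rw [dist_eq_norm, add_sub_cancel_left, norm_smul, Real.norm_of_nonneg (by positivity)]
    exact div_mul_cancel₀ r hd.ne'
  have hz : z ∈ ball x₀ (2 * r) := by
    rw [mem_ball] at hx ⊢
    linarith [dist_triangle z x x₀]
  have hzy : z - y ∈ D := by
    have : z - y = (1 + r / d) • (x - y) := by module
    exact this ▸ hD _ (by positivity) _ hxy
  have hconv := hf hz (hball hy) hzy ((convex_ball _ _).segment_subset hz (hball hy))
  set t := d / (d + r)
  have ht₀ : 0 ≤ t := by positivity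
  have ht₁ : t ≤ 1 := div_le_one_of_le₀ (by linarith) (by positivity)
  have hx_eq : t • z + (1 - t) • y = x := by
    have hcoef : t * (1 + r / d) = 1 := by simp only [t]; field_simp
    calc t • z + (1 - t) • y = (t * (1 + r / d)) • (x - y) + y := by module
      _ = x := by rw [hcoef, one_smul, sub_add_cancel]
  have hm₀ : 0 ≤ m := by simpa using hm x (hball hx) x (hball hx)
  calc f x - f y ≤ t * (f z - f y) :=
        hx_eq ▸ hconv.sub_le_mul_sub (left_mem_segment ℝ z y) (right_mem_segment ℝ z y) ht₀ ht₁
    _ ≤ t * m := mul_le_mul_of_nonneg_left (hm z hz y (hball hy)) ht₀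
    _ ≤ d / r * m :=
        mul_le_mul_of_nonneg_right (div_le_div_of_nonneg_left hd.le hr (by linarith)) hm₀
    _ = m / r * d := by ring

theorem dconvex_difference_quotient_in_directions_general
    {V : Type*} [NormedAddCommGroup V] [NormedSpace ℝ V]
    (D : Set V) (hDbal : ∀ (t : ℝ), ∀ x ∈ D, t • x ∈ D)
    (x₀ : V) (r : ℝ) (hr : 0 < r)
    (f : V → ℝ) (hf : DConvexOn D (ball x₀ (2 * r)) f)
    (m : ℝ) (hm : ∀ u ∈ ball x₀ (2 * r), ∀ v ∈ ball x₀ (2 * r), f u - f v ≤ m)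
    (x y : V) (hx : x ∈ ball x₀ r) (hy : y ∈ ball x₀ r) (hxy : x - y ∈ D) :
    |f x - f y| ≤ m / r * ‖x - y‖ := by
  have hD : ∀ t : ℝ, 0 < t → ∀ v ∈ D, t • v ∈ D := fun t _ ↦ hDbal t
  have hyx : y - x ∈ D := by simpa using hDbal (-1) _ hxy
  rw [abs_sub_le_iff]
  refine ⟨hf.sub_le_div_mul_norm hD hr hm hx hy hxy, ?_⟩
  simpa only [norm_sub_rev y x] using hf.sub_le_div_mul_norm hD hr hm hy hx hyx

/-- Step 2 of the Lipschitz estimate: for a D-convex function on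
`B(x₀,2r)` and points `x, y ∈ B(x₀,r)` with `x − y ∈ D`, one has
`|f(x) − f(y)| ≤ (m/r)‖x − y‖` where `m` bounds the oscillation on `B(x₀,2r)`. -/
theorem dconvex_difference_quotient_in_directions
    {V : Type*} [NormedAddCommGroup V] [NormedSpace ℝ V] [FiniteDimensional ℝ V]
    (D : Set V) (hDbal : ∀ (t : ℝ), ∀ x ∈ D, t • x ∈ D)
    (hDspan : Submodule.span ℝ D = ⊤)
    (x₀ : V) (r : ℝ) (hr : 0 < r)
    (f : V → ℝ) (hf : DConvexOn D (ball x₀ (2 * r)) f)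
    (m : ℝ) (hm : ∀ u ∈ ball x₀ (2 * r), ∀ v ∈ ball x₀ (2 * r), f u - f v ≤ m)
    (x y : V) (hx : x ∈ ball x₀ r) (hy : y ∈ ball x₀ r) (hxy : x - y ∈ D) :
    |f x - f y| ≤ m / r * ‖x - y‖ :=
  dconvex_difference_quotient_in_directions_general D hDbal x₀ r hr f hf m hm x y hx hy hxy
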